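/- arXiv:1904.06204 — 2 statements merged into one kernel-verified Lean document; each statement's English description precedes it below -/
import Mathlib

section
/- The filled Julia set K_c is upper semi-continuous in the parameter c: for any ĉ ∈ ℂ and any ε > 0 there exists δ > 0 such that for all c with |c - ĉ| < δ, K_c is contained in the ε-neighbourhood of K_ĉ. -/
open Bornology Set Metric

lemma escape_lemma (c z : ℂ) (h : ‖c‖ + 2 ≤ ‖z‖) :
    ¬ Bornology.IsBounded (Set.range fun n => (fun y => y ^ 2 + c)^[n] z) := by
  have key : ∀ n : ℕ, ‖c‖ + 2 ≤ ‖(fun y => y ^ 2 + c)^[n] z‖ ∧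
      2 ^ n * ‖z‖ ≤ ‖(fun y => y ^ 2 + c)^[n] z‖ := by
    intro n
    induction n with
    | zero =>
      simp only [Function.iterate_zero, id_eq, pow_zero, one_mul]
      exact ⟨h, le_refl _⟩
    | succ n ih =>
      obtain ⟨h1, h2⟩ := ih
      set x := (fun y => y ^ 2 + c)^[n] z with hx
      rw [Function.iterate_succ_apply']
      have habs : ‖x ^ 2‖ ≤ ‖x ^ 2 + c‖ + ‖c‖ := by
        have h' := norm_add_le (x ^ 2 + c) (-c)
        simpa using h'
      have hsq : ‖x ^ 2‖ = ‖x‖ ^ 2 := by rw [norm_pow]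
      have hc0 : 0 ≤ ‖c‖ := norm_nonneg c
      have hz0 : 0 ≤ ‖z‖ := norm_nonneg z
      have hdouble : 2 * ‖x‖ ≤ ‖x ^ 2 + c‖ := by
        nlinarith [h1, habs, hsq]
      constructor
      · nlinarith [h1, hdouble]
      · have he : 2 ^ (n + 1) * ‖z‖ = 2 * (2 ^ n * ‖z‖) := by ring
        rw [he]
        nlinarith [h2, hdouble]
  intro hb
  obtain ⟨C, hC⟩ := isBounded_iff_forall_norm_le.mp hb
  obtain ⟨n, hn⟩ := pow_unbounded_of_one_lt C (one_lt_two (α := ℝ))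
  have h1 : (2 : ℝ) ^ n * 1 ≤ 2 ^ n * ‖z‖ := by
    apply mul_le_mul_of_nonneg_left _ (by positivity)
    nlinarith [norm_nonneg c]
  have h2 := (key n).2
  have h3 := hC _ (Set.mem_range_self n)
  nlinarith

lemma tail_bounded (c z : ℂ) (N : ℕ)
    (h : Bornology.IsBounded (Set.range fun n => (fun y => y ^ 2 + c)^[n] z)) :
    Bornology.IsBounded (Set.range fun n => (fun y => y ^ 2 + c)^[n]
      ((fun y => y ^ 2 + c)^[N] z)) := by
  apply h.subset
  rintro _ ⟨n, rfl⟩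
  exact ⟨n + N, (Function.iterate_add_apply _ n N z)⟩

lemma cont_iter (N : ℕ) :
    Continuous fun p : ℂ × ℂ => (fun y => y ^ 2 + p.1)^[N] p.2 := by
  induction N with
  | zero => simpa using continuous_snd
  | succ n ih =>
    have heq : (fun p : ℂ × ℂ => (fun y => y ^ 2 + p.1)^[n + 1] p.2) =
        fun p : ℂ × ℂ => ((fun y => y ^ 2 + p.1)^[n] p.2) ^ 2 + p.1 := by
      funext p; rw [Function.iterate_succ_apply']
    rw [heq]
    exact (ih.pow 2).add continuous_fst

/-- Upper semi-continuity of the filled Julia set in the parameter: for any `ĉ ∈ ℂ`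
and `ε > 0` there is `δ > 0` such that `|c - ĉ| < δ` implies `K_c ⊆ (K_ĉ)^ε`. -/
theorem filledJulia_upper_semicontinuous (chat : ℂ) (ε : ℝ) (hε : 0 < ε) :
    ∃ δ > 0, ∀ c : ℂ, ‖c - chat‖ < δ →
      {w : ℂ | Bornology.IsBounded (Set.range fun n => (fun z => z ^ 2 + c)^[n] w)} ⊆
        ⋃ z ∈ {w : ℂ | Bornology.IsBounded
          (Set.range fun n => (fun y => y ^ 2 + chat)^[n] w)}, Metric.ball z ε := by
  set R : ℝ := ‖chat‖ + 3 with hR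
  set K : Set ℂ := {w : ℂ | Bornology.IsBounded
    (Set.range fun n => (fun y => y ^ 2 + chat)^[n] w)} with hK
  set U : Set ℂ := ⋃ z ∈ K, Metric.ball z ε with hU
  have hUopen : IsOpen U := isOpen_biUnion fun _ _ => isOpen_ball
  set S : Set ℂ := Metric.closedBall 0 R \ U with hS
  have hScomp : IsCompact S := (isCompact_closedBall 0 R).diff hUopen
  set W : Set (ℂ × ℂ) := ⋃ N : ℕ,
    (fun p : ℂ × ℂ => ‖(fun y => y ^ 2 + p.1)^[N] p.2‖) ⁻¹' Set.Ioi R with hW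
  have hWopen : IsOpen W := isOpen_iUnion fun N =>
    (isOpen_Ioi.preimage (continuous_norm.comp (cont_iter N)))
  have hsub : ({chat} : Set ℂ) ×ˢ S ⊆ W := by
    rintro ⟨c', w⟩ ⟨hc', hw⟩
    rw [Set.mem_singleton_iff] at hc'
    rw [show ((c', w) : ℂ × ℂ) = (chat, w) from Prod.ext hc' rfl]
    have hwK : w ∉ K := by
      intro hwK
      exact hw.2 (Set.mem_biUnion hwK (Metric.mem_ball_self hε))
    have hnb : ¬ Bornology.IsBounded
        (Set.range fun n => (fun y => y ^ 2 + chat)^[n] w) := hwK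
    rw [isBounded_iff_forall_norm_le] at hnb
    push_neg at hnb
    obtain ⟨x, ⟨N, rfl⟩, hx⟩ := hnb R
    refine Set.mem_iUnion.mpr ⟨N, ?_⟩
    simpa using hx
  obtain ⟨u, v, huopen, hvopen, hcu, hSv, huv⟩ :=
    generalized_tube_lemma isCompact_singleton hScomp hWopen hsub
  have hchatu : chat ∈ u := hcu rfl
  obtain ⟨δ₀, hδ₀, hball⟩ := Metric.isOpen_iff.mp huopen chat hchatu
  refine ⟨min δ₀ 1, lt_min hδ₀ one_pos, fun c hc z hz => ?_⟩
  by_contra hzU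
  have hc1 : ‖c - chat‖ < 1 := hc.trans_le (min_le_right _ _)
  have hcabs : ‖c‖ + 2 ≤ R := by
    have htri : ‖c‖ ≤ ‖chat‖ + ‖c - chat‖ := by
      calc ‖c‖ = ‖chat + (c - chat)‖ := by ring_nf
      _ ≤ ‖chat‖ + ‖c - chat‖ := norm_add_le _ _
    rw [hR]; linarith
  have hzball : z ∈ Metric.closedBall 0 R := by
    by_contra hzb
    simp only [Metric.mem_closedBall, Complex.dist_eq, sub_zero] at hzb
    push_neg at hzb
    exact escape_lemma c z (by linarith) hz
  have hzS : z ∈ S := ⟨hzball, hzU⟩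
  have hcu' : c ∈ u := hball (by
    simp only [Metric.mem_ball, Complex.dist_eq]
    exact hc.trans_le (min_le_left _ _))
  have hcW : (c, z) ∈ W := huv ⟨hcu', hSv hzS⟩
  obtain ⟨N, hN⟩ := Set.mem_iUnion.mp hcW
  have hN' : R < ‖(fun y => y ^ 2 + c)^[N] z‖ := hN
  exact escape_lemma c _ (by linarith) (tail_bounded c z N hz)
end

section
/- A holomorphic map h defined on a right half-plane H = {Re z > R} such that h(z+1) = h(z)+1 for all z ∈ H, and such that h(H) ⊆ H with h injective and h - id bounded, must be a translation: h(z) = z + c for some constant c ∈ ℂ. -/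
/-- A holomorphic self-map `h` of a right half-plane `H = {Re z > R}` which commutes
with the unit translation, is injective, and has `h - id` bounded, is a translation:
`h(z) = z + c`. -/
theorem halfplane_translation
    (R : ℝ) (h : ℂ → ℂ)
    (hhol : DifferentiableOn ℂ h {z : ℂ | R < z.re})
    (hcomm : ∀ z ∈ {z : ℂ | R < z.re}, h (z + 1) = h z + 1)
    (hmaps : ∀ z ∈ {z : ℂ | R < z.re}, h z ∈ {z : ℂ | R < z.re})
    (hinj : Set.InjOn h {z : ℂ | R < z.re})
    (hbdd : ∃ C : ℝ, ∀ z ∈ {z : ℂ | R < z.re}, ‖h z - z‖ ≤ C) :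
    ∃ c : ℂ, ∀ z ∈ {z : ℂ | R < z.re}, h z = z + c := by
  obtain ⟨C, hC⟩ := hbdd
  set H : Set ℂ := {z : ℂ | R < z.re} with hH
  have hHopen : IsOpen H := isOpen_lt continuous_const Complex.continuous_re
  set g : ℂ → ℂ := fun z => h z - z with hg
  have hgdiff : DifferentiableOn ℂ g H := hhol.sub differentiableOn_id
  -- periodicity of g under natural shifts
  have gadd : ∀ w ∈ H, ∀ k : ℕ, g (w + k) = g w := by
    intro w hw k
    induction k with
    | zero => simp
    | succ k ih =>
      have hwk : w + (k : ℂ) ∈ H := by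
        simp only [hH, Set.mem_setOf_eq] at hw ⊢
        simp only [Complex.add_re, Complex.natCast_re]
        linarith [Nat.cast_nonneg (α := ℝ) k]
      have hstep := hcomm _ hwk
      have key : h (w + ((k : ℂ) + 1)) - (w + ((k : ℂ) + 1)) = h (w + (k : ℂ)) - (w + (k : ℂ)) := by
        rw [show w + ((k : ℂ) + 1) = w + (k : ℂ) + 1 from by ring, hstep]; ring
      calc g (w + ((k + 1 : ℕ) : ℂ)) = h (w + ((k : ℂ) + 1)) - (w + ((k : ℂ) + 1)) := by
            push_cast; rfl
        _ = g (w + (k : ℂ)) := key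
        _ = g w := ih
  set m : ℂ → ℕ := fun z => ⌈R + 1 - z.re⌉₊ with hm
  have hmem : ∀ z : ℂ, z + (m z : ℂ) ∈ H := by
    intro z
    simp only [hH, Set.mem_setOf_eq, Complex.add_re, Complex.natCast_re]
    have := Nat.le_ceil (R + 1 - z.re)
    have : R + 1 - z.re ≤ (m z : ℝ) := this
    linarith
  set G : ℂ → ℂ := fun z => g (z + m z) with hG
  -- G agrees with g ∘ (· + n) for any n ≥ m z
  have hGeq : ∀ z : ℂ, ∀ n : ℕ, m z ≤ n → G z = g (z + n) := by
    intro z n hn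
    have h1 : g (z + (m z : ℂ) + ((n - m z : ℕ) : ℂ)) = g (z + m z) := gadd _ (hmem z) _
    show g (z + (m z : ℂ)) = g (z + n)
    rw [← h1]
    congr 1
    push_cast [Nat.cast_sub hn]
    ring
  have hGdiff : Differentiable ℂ G := by
    intro z₀
    have hnbhd : {z : ℂ | R - (m z₀ : ℝ) < z.re} ∈ nhds z₀ := by
      apply (isOpen_lt continuous_const Complex.continuous_re).mem_nhds
      have h1 : R + 1 - z₀.re ≤ (m z₀ : ℝ) := Nat.le_ceil _
      simp only [Set.mem_setOf_eq]
      linarith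
    have heq : G =ᶠ[nhds z₀] fun z => g (z + ((m z₀ + 1 : ℕ) : ℂ)) := by
      filter_upwards [hnbhd] with z hz
      apply hGeq
      rw [Nat.ceil_le]
      have hcst : ((m z₀ + 1 : ℕ) : ℝ) = (m z₀ : ℝ) + 1 := by push_cast; ring
      rw [hcst]
      linarith
    have hd : DifferentiableAt ℂ (fun z => g (z + ((m z₀ + 1 : ℕ) : ℂ))) z₀ := by
      have hmemH : z₀ + ((m z₀ + 1 : ℕ) : ℂ) ∈ H := by
        simp only [hH, Set.mem_setOf_eq, Complex.add_re, Complex.natCast_re]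
        have h1 : R + 1 - z₀.re ≤ (m z₀ : ℝ) := Nat.le_ceil _
        have hcst : ((m z₀ + 1 : ℕ) : ℝ) = (m z₀ : ℝ) + 1 := by push_cast; ring
        rw [hcst]
        linarith
      exact (hgdiff.differentiableAt (hHopen.mem_nhds hmemH)).comp z₀
        (differentiableAt_id.add_const _)
    exact (Filter.EventuallyEq.differentiableAt_iff heq).2 hd
  have hGbdd : ∀ z, ‖G z‖ ≤ C := by
    intro z
    have := hC _ (hmem z)
    simpa [hG, hg] using this
  have hconst : ∀ z w : ℂ, G z = G w := by
    intro z w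
    apply hGdiff.apply_eq_apply_of_bounded
    apply isBounded_iff_forall_norm_le.2 ⟨C, ?_⟩
    rintro x ⟨y, rfl⟩
    exact hGbdd y
  refine ⟨G 0, fun z hz => ?_⟩
  have h1 : G z = g z := gadd z hz (m z)
  have h2 : h z - z = G 0 := by
    have h3 := hconst z 0
    rw [h1] at h3
    exact h3
  linear_combination h2
end
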